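/- Let A₁, …, A_m ∈ C^{n×n} and γ₁, …, γ_m ∈ R. If Σ_{k=1}^m θ(e^{−iγ_k} A_k) + | Σ_{k=1}^m γ_k | < π, then the singular angle of the product satisfies θ(A_m A_{m−1} ⋯ A₁) ≤ Σ_{k=1}^m θ(e^{−iγ_k} A_k) + | Σ_{k=1}^m γ_k | < π, and consequently |arg λ| < π for every nonzero eigenvalue λ of A_m⋯A₁, so I + A_m⋯A₁ is invertible. -/

import Mathlib

open scoped Matrix

noncomputable def evnorm {n : ℕ} (x : Fin n → ℂ) : ℝ :=
  Real.sqrt ((star x ⬝ᵥ x).re)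

noncomputable def qform {n : ℕ} (A : Matrix (Fin n) (Fin n) ℂ) (x : Fin n → ℂ) : ℂ :=
  star x ⬝ᵥ A.mulVec x

noncomputable def nnr {n : ℕ} (A : Matrix (Fin n) (Fin n) ℂ) : Set ℂ :=
  {z | ∃ x : Fin n → ℂ, x ≠ 0 ∧ A.mulVec x ≠ 0 ∧
    z = qform A x / ((evnorm x * evnorm (A.mulVec x) : ℝ) : ℂ)}

noncomputable def singAngle {n : ℕ} (A : Matrix (Fin n) (Fin n) ℂ) : ℝ :=
  sSup {θ : ℝ | ∃ x : Fin n → ℂ, x ≠ 0 ∧ A.mulVec x ≠ 0 ∧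
    θ = Real.arccos ((qform A x).re / (evnorm x * evnorm (A.mulVec x)))}

noncomputable def revProd {n m : ℕ} (A : Fin m → Matrix (Fin n) (Fin n) ℂ) :
    Matrix (Fin n) (Fin n) ℂ :=
  (List.ofFn A).reverse.prod

/-!
Singular angles are suprema of the real angle `∠(x, M x)`, so the triangle inequality for angles
gives `θ(M N) ≤ θ(M) + θ(N)` and, since `∠(y, c • y) = |arg c|`, also `θ(c M) ≤ θ(M) + |arg c|`;
an eigenvector `v` for `μ ≠ 0` gives `|arg μ| = ∠(v, M v) ≤ θ(M)`. Writing
`A_k = e^{iγ_k} (e^{-iγ_k} A_k)` and pulling the scalar `e^{i Σ γ_k}` out of the product yields the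
bound. It is `< π`, so `-1` is not an eigenvalue and `1 + A_m ⋯ A_1` is invertible.
-/

open InnerProductGeometry Complex WithLp

section SingularAngle

-- The real inner product `re ⟪x, y⟫_ℂ`. On `EuclideanSpace ℂ (Fin n)` it takes precedence over
-- the propositionally equal `PiLp` instance, which makes `singAngle_eq_singularAngle` a matter of
-- unfolding.
attribute [local instance] InnerProductSpace.complexToReal

variable {E : Type*} [NormedAddCommGroup E] [InnerProductSpace ℂ E]

noncomputable def singularAngle (f : Module.End ℂ E) : ℝ :=
  ⨆ x : {x : E // f x ≠ 0}, angle (x : E) (f x)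

lemma angle_le_singularAngle {f : Module.End ℂ E} {x : E} (hx : f x ≠ 0) :
    angle x (f x) ≤ singularAngle f :=
  le_ciSup (f := fun x : {x : E // f x ≠ 0} => angle (x : E) (f x))
    ⟨Real.pi, by rintro _ ⟨y, rfl⟩; exact angle_le_pi _ _⟩ ⟨x, hx⟩

lemma singularAngle_nonneg (f : Module.End ℂ E) : 0 ≤ singularAngle f :=
  Real.iSup_nonneg fun _ => angle_nonneg _ _

lemma singularAngle_le {f : Module.End ℂ E} {c : ℝ} (hc : 0 ≤ c)
    (H : ∀ x, f x ≠ 0 → angle x (f x) ≤ c) : singularAngle f ≤ c :=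
  Real.iSup_le (fun x => H x x.2) hc

lemma singularAngle_one : singularAngle (1 : Module.End ℂ E) = 0 :=
  le_antisymm (singularAngle_le le_rfl fun _ hx => (angle_self hx).le) (singularAngle_nonneg _)

lemma singularAngle_mul_le (f g : Module.End ℂ E) :
    singularAngle (f * g) ≤ singularAngle f + singularAngle g := by
  refine singularAngle_le (add_nonneg (singularAngle_nonneg f) (singularAngle_nonneg g))
    fun x hfgx => ?_
  have hgx : g x ≠ 0 := fun h => hfgx (by simp [h])
  calc angle x (f (g x)) ≤ angle x (g x) + angle (g x) (f (g x)) :=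
        angle_le_angle_add_angle _ _ _
    _ ≤ singularAngle g + singularAngle f :=
        add_le_add (angle_le_singularAngle hgx) (angle_le_singularAngle hfgx)
    _ = singularAngle f + singularAngle g := add_comm _ _

lemma singularAngle_list_prod_le (l : List (Module.End ℂ E)) :
    singularAngle l.prod ≤ (l.map singularAngle).sum := by
  induction l with
  | nil => simp [singularAngle_one]
  | cons f l ih =>
    rw [List.prod_cons, List.map_cons, List.sum_cons]
    exact (singularAngle_mul_le f l.prod).trans (by gcongr)

lemma angle_smul_self {c : ℂ} (hc : c ≠ 0) {x : E} (hx : x ≠ 0) :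
    angle x (c • x) = |c.arg| := by
  have hre : (c * inner ℂ x x).re = c.re * ‖x‖ ^ 2 := by
    rw [inner_self_eq_norm_sq_to_K, ← RCLike.ofReal_pow]
    exact Complex.re_mul_ofReal _ _
  have hx' : ‖x‖ ≠ 0 := norm_ne_zero_iff.mpr hx
  rw [← angle_one_left hc, angle, angle, real_inner_eq_re_inner ℂ, inner_smul_right,
    RCLike.re_to_complex, hre, norm_smul, Complex.inner, map_one, mul_one, norm_one, one_mul]
  field_simp

lemma singularAngle_smul_le (c : ℂ) (f : Module.End ℂ E) :
    singularAngle (c • f) ≤ singularAngle f + |c.arg| := by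
  refine singularAngle_le (add_nonneg (singularAngle_nonneg f) (abs_nonneg _)) fun x hcfx => ?_
  have hfx : f x ≠ 0 := right_ne_zero_of_smul hcfx
  calc angle x (c • f x) ≤ angle x (f x) + angle (f x) (c • f x) :=
        angle_le_angle_add_angle _ _ _
    _ = angle x (f x) + |c.arg| := by rw [angle_smul_self (left_ne_zero_of_smul hcfx) hfx]
    _ ≤ singularAngle f + |c.arg| := by gcongr; exact angle_le_singularAngle hfx

lemma abs_arg_le_singularAngle {f : Module.End ℂ E} {μ : ℂ} (hμ : f.HasEigenvalue μ)
    (hμ0 : μ ≠ 0) : |μ.arg| ≤ singularAngle f := by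
  obtain ⟨v, hv⟩ := hμ.exists_hasEigenvector
  have hfv : f v = μ • v := hv.apply_eq_smul
  rw [← angle_smul_self hμ0 hv.2, ← hfv]
  exact angle_le_singularAngle (hfv ▸ smul_ne_zero hμ0 hv.2)

variable {n : ℕ}

noncomputable def toEuclideanEnd :
    Matrix (Fin n) (Fin n) ℂ ≃ₐ[ℂ] Module.End ℂ (EuclideanSpace ℂ (Fin n)) :=
  Matrix.toLinAlgEquiv (PiLp.basisFun 2 ℂ (Fin n))

lemma evnorm_eq_norm_toLp (x : Fin n → ℂ) : evnorm x = ‖toLp 2 x‖ := by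
  rw [evnorm, norm_eq_sqrt_re_inner (𝕜 := ℂ), EuclideanSpace.inner_toLp_toLp, dotProduct_comm]
  rfl

lemma singAngle_eq_singularAngle (A : Matrix (Fin n) (Fin n) ℂ) :
    singAngle A = singularAngle (toEuclideanEnd A) := by
  have key : ∀ x : Fin n → ℂ, Real.arccos ((qform A x).re / (evnorm x * evnorm (A *ᵥ x))) =
      angle (toLp 2 x) (toEuclideanEnd A (toLp 2 x)) := by
    intro x
    rw [qform, dotProduct_comm, evnorm_eq_norm_toLp, evnorm_eq_norm_toLp]
    rfl
  unfold singAngle singularAngle iSup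
  congr 1
  ext θ
  constructor
  · rintro ⟨x, -, hAx, rfl⟩
    exact ⟨⟨toLp 2 x, fun h => hAx (congrArg ofLp h)⟩, (key x).symm⟩
  · rintro ⟨⟨x, hx⟩, rfl⟩
    have hx0 : x ≠ 0 := by rintro rfl; exact hx (map_zero _)
    exact ⟨ofLp x, by simpa using hx0, fun h => hx (congrArg (toLp 2) h), (key (ofLp x)).symm⟩

end SingularAngle

lemma Complex.abs_arg_exp_ofReal_mul_I_le (σ : ℝ) : |(exp (σ * I)).arg| ≤ |σ| := by
  rcases le_or_gt |σ| Real.pi with hσ | hσ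
  · have hcos : Real.cos (exp (σ * I)).arg = Real.cos σ := by
      rw [cos_arg (exp_ne_zero _), norm_exp_ofReal_mul_I, div_one, exp_ofReal_mul_I_re]
    calc |(exp (σ * I)).arg| = Real.arccos (Real.cos |(exp (σ * I)).arg|) :=
          (Real.arccos_cos (abs_nonneg _) (abs_arg_le_pi _)).symm
      _ = Real.arccos (Real.cos |σ|) := by rw [Real.cos_abs, Real.cos_abs, hcos]
      _ ≤ |σ| := (Real.arccos_cos (abs_nonneg _) hσ).le
  · exact (abs_arg_le_pi _).trans hσ.le

lemma isUnit_one_add_of_neg_one_notMem_spectrum {R A : Type*} [CommRing R] [Ring A]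
    [Algebra R A] {a : A} (h : (-1 : R) ∉ spectrum R a) : IsUnit (1 + a) := by
  have := (spectrum.notMem_iff.mp h).neg
  rwa [map_neg, map_one, neg_sub, sub_neg_eq_add, add_comm] at this

section Matrix

variable {n : ℕ}

lemma singAngle_smul_le (c : ℂ) (A : Matrix (Fin n) (Fin n) ℂ) :
    singAngle (c • A) ≤ singAngle A + |c.arg| := by
  simpa only [singAngle_eq_singularAngle, map_smul] using singularAngle_smul_le c _

lemma abs_arg_le_singAngle {A : Matrix (Fin n) (Fin n) ℂ} {μ : ℂ} (hμ : μ ∈ spectrum ℂ A)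
    (hμ0 : μ ≠ 0) : |μ.arg| ≤ singAngle A := by
  rw [singAngle_eq_singularAngle]
  refine abs_arg_le_singularAngle (Module.End.hasEigenvalue_iff_mem_spectrum.mpr ?_) hμ0
  rwa [AlgEquiv.spectrum_eq]

lemma singAngle_revProd_le {m : ℕ} (A : Fin m → Matrix (Fin n) (Fin n) ℂ) :
    singAngle (revProd A) ≤ ∑ k, singAngle (A k) := by
  rw [singAngle_eq_singularAngle, revProd, map_list_prod]
  refine (singularAngle_list_prod_le _).trans_eq ?_
  rw [List.map_reverse, List.map_reverse, List.sum_reverse, List.map_ofFn, List.map_ofFn,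
    List.sum_ofFn]
  simp [singAngle_eq_singularAngle]

lemma revProd_succ {m : ℕ} (A : Fin (m + 1) → Matrix (Fin n) (Fin n) ℂ) :
    revProd A = revProd (fun i => A i.succ) * A 0 := by
  simp [revProd, List.ofFn_succ]

lemma revProd_smul {m : ℕ} (c : Fin m → ℂ) (A : Fin m → Matrix (Fin n) (Fin n) ℂ) :
    revProd (fun k => c k • A k) = (∏ k, c k) • revProd A := by
  induction m with
  | zero => simp [revProd]
  | succ m ih =>
    rw [revProd_succ, revProd_succ A, Fin.prod_univ_succ, ih (fun i => c i.succ),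
      smul_mul_smul_comm, mul_comm (c 0)]

lemma singAngle_revProd_le_sum_add_abs {m : ℕ} (A : Fin m → Matrix (Fin n) (Fin n) ℂ)
    (γ : Fin m → ℝ) :
    singAngle (revProd A) ≤
      (∑ k, singAngle (exp (-(γ k : ℂ) * I) • A k)) + |∑ k, γ k| := by
  set B := fun k => exp (-(γ k : ℂ) * I) • A k
  have hA : A = fun k => exp (γ k * I) • B k := by
    funext k
    simp [B, smul_smul, ← exp_add]
  calc singAngle (revProd A) = singAngle (exp ((∑ k, γ k : ℝ) * I) • revProd B) := by
        rw [hA, revProd_smul, ← exp_sum, ← Finset.sum_mul]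
        push_cast
        rfl
    _ ≤ singAngle (revProd B) + |(exp ((∑ k, γ k : ℝ) * I)).arg| := singAngle_smul_le _ _
    _ ≤ (∑ k, singAngle (B k)) + |∑ k, γ k| :=
        add_le_add (singAngle_revProd_le B) (abs_arg_exp_ofReal_mul_I_le _)

end Matrix

theorem stmt16 {n m : ℕ} (Ak : Fin m → Matrix (Fin n) (Fin n) ℂ) (γ : Fin m → ℝ)
    (h : (∑ k, singAngle (Complex.exp (-(γ k : ℂ) * Complex.I) • Ak k)) +
        |∑ k, γ k| < Real.pi) :
    singAngle (revProd Ak) ≤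
        (∑ k, singAngle (Complex.exp (-(γ k : ℂ) * Complex.I) • Ak k)) + |∑ k, γ k| ∧
      (∀ μ ∈ spectrum ℂ (revProd Ak), μ ≠ 0 → |Complex.arg μ| < Real.pi) ∧
      IsUnit (1 + revProd Ak) := by
  have hbound := singAngle_revProd_le_sum_add_abs Ak γ
  have harg : ∀ μ ∈ spectrum ℂ (revProd Ak), μ ≠ 0 → |μ.arg| < Real.pi := fun μ hμ hμ0 =>
    ((abs_arg_le_singAngle hμ hμ0).trans hbound).trans_lt h
  refine ⟨hbound, harg, isUnit_one_add_of_neg_one_notMem_spectrum (R := ℂ) fun hmem => ?_⟩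
  simpa [arg_neg_one, abs_of_pos Real.pi_pos] using harg (-1) hmem (by norm_num)
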